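/- Let n ≥ 1. The second moment of the real equatorial stabilizer ensemble satisfies (1/|ℬₙ|) Σ_{A ∈ ℬₙ} (φ^{req}_A (φ^{req}_A)†)^{⊗2} = (1/4ⁿ) ( I + Σ_{x,y ∈ {0,1}ⁿ} |x y⟩⟨y x| + Σ_{x,y ∈ {0,1}ⁿ} |x x⟩⟨y y| − 2 Σ_{x ∈ {0,1}ⁿ} |x x⟩⟨x x| ), an identity of 4ⁿ×4ⁿ matrices indexed by pairs of bit strings. -/

import Mathlib

/-! The entry of `kron2 (outer φ_A)` at `((x, y), (w, s))` is
`4⁻ⁿ (-1)^(q_A x + q_A y + q_A w + q_A s)`, and over `𝔽₂` the exponent is the linear form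
`Σ_{i ≤ j} a_ij c_ij` in the free entries of `A`, where `c = x xᵀ + y yᵀ + w wᵀ + s sᵀ`.
Averaging over `ℬₙ` therefore kills the entry unless `c` vanishes on and above the diagonal.
The diagonal forces `s = x + y + w`, and then `c = a bᵀ + b aᵀ` with `a = x + y`, `b = x + w`;
this vanishes iff `a = 0`, `b = 0` or `a = b`, i.e. iff `x, y, w, s` split into two equal
pairs. By inclusion–exclusion (two of the three pairings force `x = y = w = s`), the
right-hand side is exactly the indicator of that event. -/

open Finset Matrix

/-- Bit strings of length `n`, with entries viewed as `0/1` integers via `Fin 2`. -/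
abbrev Bits (n : ℕ) := Fin n → Fin 2

/-- The index set `ℬₙ`: upper-triangular `n × n` matrices with entries in `{0,1}`
(`a_{ij} = 0` for `i > j`). -/
def Bn (n : ℕ) : Finset (Matrix (Fin n) (Fin n) (Fin 2)) :=
  @Finset.filter _ (fun A => ∀ i j : Fin n, j < i → A i j = 0)
    (fun _ => @Fintype.decidableForallFintype _ _ (fun _ => inferInstance) _) Finset.univ

/-- The quadratic form `xᵀ A x` (its parity is what matters). -/
def quadB {n : ℕ} (A : Matrix (Fin n) (Fin n) (Fin 2)) (x : Bits n) : ℕ :=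
  ∑ i, ∑ j, (A i j : ℕ) * (x i : ℕ) * (x j : ℕ)

/-- The real equatorial stabilizer state `φ^{req}_A`. -/
noncomputable def phiReq {n : ℕ} (A : Matrix (Fin n) (Fin n) (Fin 2)) (x : Bits n) : ℂ :=
  (-1 : ℂ) ^ quadB A x / (Real.sqrt (2 ^ n) : ℂ)

/-- The rank-one projector `φ φ†` onto a vector `φ`. -/
noncomputable def outer {ι : Type*} (φ : ι → ℂ) : Matrix ι ι ℂ :=
  Matrix.of fun x y => φ x * (starRingEnd ℂ) (φ y)

/-- The Kronecker (tensor) square of a matrix, indexed by pairs. -/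
def kron2 {ι : Type*} (M : Matrix ι ι ℂ) : Matrix (ι × ι) (ι × ι) ℂ :=
  Matrix.of fun p q => M p.1 q.1 * M p.2 q.2

def signChar : AddChar (ZMod 2) ℂ where
  toFun a := (-1) ^ a.val
  map_zero_eq_one' := by simp
  map_add_eq_mul' a b := by rw [ZMod.val_add, ← neg_one_pow_eq_pow_mod_two, pow_add]

lemma neg_one_pow_eq_signChar (k : ℕ) : (-1 : ℂ) ^ k = signChar k := by
  rw [signChar, AddChar.coe_mk, ZMod.val_natCast, ← neg_one_pow_eq_pow_mod_two]

lemma signChar_add_one (a : ZMod 2) : signChar (a + 1) = -signChar a := by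
  rw [AddChar.map_add_eq_mul, show signChar 1 = -1 from pow_one _, mul_neg_one]

-- `Fin 2` has no global ring structure (`Fin.instCommRing` is scoped), so the arithmetic of
-- bits is done in `ZMod 2`.
def toZMod2 (p : Fin 2) : ZMod 2 := (p : ℕ)

lemma toZMod2_add (p q : Fin 2) : toZMod2 (p + q) = toZMod2 p + toZMod2 q := by decide +revert

@[simp] lemma toZMod2_zero : toZMod2 0 = 0 := rfl

@[simp] lemma toZMod2_one : toZMod2 1 = 1 := rfl

lemma toZMod2_injective : Function.Injective toZMod2 := by decide

section Combinatorics

variable {ι α : Type*}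

abbrev PairsUp (x y w s : α) : Prop :=
  (x = w ∧ y = s) ∨ (x = s ∧ y = w) ∨ (x = y ∧ w = s)

lemma Function.Injective.pairsUp_iff {β : Type*} {f : α → β} (hf : Function.Injective f)
    {x y w s : α} :
    PairsUp (f x) (f y) (f w) (f s) ↔ PairsUp x y w s := by
  simp only [PairsUp, hf.eq_iff]

def quadCoeffs (x y w s : ι → ZMod 2) : Matrix ι ι (ZMod 2) :=
  vecMulVec x x + vecMulVec y y + vecMulVec w w + vecMulVec s s

lemma eq_zero_or_eq_zero_or_eq_of_mul_comm {a b : ι → ZMod 2}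
    (h : ∀ i j, a i * b j = a j * b i) : a = 0 ∨ b = 0 ∨ a = b := by
  have eq_one : ∀ c : ZMod 2, c ≠ 0 → c = 1 := by decide
  rcases eq_or_ne a 0 with ha | ha
  · exact .inl ha
  rcases eq_or_ne b 0 with hb | hb
  · exact .inr (.inl hb)
  obtain ⟨i, hai⟩ := Function.ne_iff.mp ha
  obtain ⟨k, hbk⟩ := Function.ne_iff.mp hb
  have hbi : b i = 1 := by
    have := h i k
    rw [eq_one _ hai, eq_one _ hbk, one_mul] at this
    exact eq_one _ (right_ne_zero_of_mul (this ▸ one_ne_zero))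
  refine .inr (.inr (funext fun j => ?_))
  simpa [eq_one _ hai, hbi] using (h i j).symm

lemma quadCoeffs_upper_eq_zero_iff [LinearOrder ι] {x y w s : ι → ZMod 2} :
    (∀ i j, i ≤ j → quadCoeffs x y w s i j = 0) ↔ PairsUp x y w s := by
  constructor
  · intro h
    have hs : s = x + y + w := funext fun i => by
      have diag : ∀ a b c d : ZMod 2, a * a + b * b + c * c + d * d = 0 → d = a + b + c := by
        decide
      exact diag _ _ _ _ (h i i le_rfl)
    subst hs
    have sym : ∀ i j, (x + y) i * (x + w) j = (x + y) j * (x + w) i := by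
      have expand : ∀ a b c d e f : ZMod 2,
          a * b + c * d + e * f + (a + c + e) * (b + d + f) = 0 →
            (a + c) * (b + f) = (b + d) * (a + e) := by
        decide
      intro i j
      rcases le_total i j with hij | hji
      · exact expand _ _ _ _ _ _ (h i j hij)
      · exact (expand _ _ _ _ _ _ (h j i hji)).symm
    rcases eq_zero_or_eq_zero_or_eq_of_mul_comm sym with hxy | hxw | hyw
    · obtain rfl : x = y := funext fun i => CharTwo.add_eq_zero.mp (congrFun hxy i)
      exact .inr (.inr ⟨rfl, funext fun i => by simp [CharTwo.add_self_eq_zero]⟩)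
    · obtain rfl : x = w := funext fun i => CharTwo.add_eq_zero.mp (congrFun hxw i)
      exact .inl ⟨rfl, funext fun i => by
        simp [add_comm (x i), add_assoc, CharTwo.add_self_eq_zero]⟩
    · obtain rfl : y = w := add_left_cancel hyw
      exact .inr (.inl ⟨funext fun i => by simp [add_assoc, CharTwo.add_self_eq_zero], rfl⟩)
  · rintro (⟨rfl, rfl⟩ | ⟨rfl, rfl⟩ | ⟨rfl, rfl⟩) <;> intro i j _ <;>
      simp only [quadCoeffs, Matrix.add_apply, vecMulVec_apply] <;> ring_nf <;>
      simp [CharTwo.two_eq_zero]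

end Combinatorics

lemma secondMoment_rhs_apply {α : Type*} [Fintype α] [DecidableEq α] (x y w s : α) :
    ((1 : Matrix (α × α) (α × α) ℂ) + (∑ a, ∑ b, single (a, b) (b, a) 1)
      + (∑ a, ∑ b, single (a, a) (b, b) 1) - (2 : ℂ) • ∑ a, single (a, a) (a, a) 1 :
        Matrix (α × α) (α × α) ℂ) (x, y) (w, s)
      = if PairsUp x y w s then 1 else 0 := by
  simp only [Matrix.sub_apply, Matrix.add_apply, Matrix.smul_apply, Matrix.sum_apply, one_apply,
    single_apply, Prod.mk.injEq, ite_and, sum_ite_irrel, sum_ite_eq', mem_univ, if_true,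
    sum_const_zero, smul_eq_mul, mul_ite, mul_one, mul_zero]
  split_ifs <;> grind

section Ensemble

variable {n : ℕ}

def pairing (A : Matrix (Fin n) (Fin n) (Fin 2)) (C : Matrix (Fin n) (Fin n) (ZMod 2)) : ZMod 2 :=
  ∑ i, ∑ j, toZMod2 (A i j) * C i j

lemma pairing_add_right (A : Matrix (Fin n) (Fin n) (Fin 2))
    (C D : Matrix (Fin n) (Fin n) (ZMod 2)) :
    pairing A (C + D) = pairing A C + pairing A D := by
  simp only [pairing, Matrix.add_apply, mul_add, sum_add_distrib]

lemma pairing_add_single_left (A : Matrix (Fin n) (Fin n) (Fin 2))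
    (C : Matrix (Fin n) (Fin n) (ZMod 2)) (i₀ j₀ : Fin n) :
    pairing (A + single i₀ j₀ 1) C = pairing A C + C i₀ j₀ := by
  simp [pairing, toZMod2_add, add_mul, sum_add_distrib, single_apply, apply_ite toZMod2, ite_and]

lemma mem_Bn {A : Matrix (Fin n) (Fin n) (Fin 2)} :
    A ∈ Bn n ↔ ∀ i j, j < i → A i j = 0 := by
  simp [Bn]

lemma card_Bn_ne_zero : ((Bn n).card : ℂ) ≠ 0 :=
  Nat.cast_ne_zero.mpr <| card_ne_zero_of_mem
    (mem_Bn.mpr fun _ _ _ => rfl : (0 : Matrix (Fin n) (Fin n) (Fin 2)) ∈ Bn n)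

open Classical in
/-- When `C i₀ j₀ ≠ 0` with `i₀ ≤ j₀`, flipping the entry `A i₀ j₀` pairs off terms of
opposite sign. -/
lemma sum_Bn_signChar_pairing (C : Matrix (Fin n) (Fin n) (ZMod 2)) :
    ∑ A ∈ Bn n, signChar (pairing A C) =
      if ∀ i j, i ≤ j → C i j = 0 then ((Bn n).card : ℂ) else 0 := by
  split_ifs with hC
  · have pairing_eq_zero : ∀ A ∈ Bn n, pairing A C = 0 := fun A hA =>
      sum_eq_zero fun i _ => sum_eq_zero fun j _ => by
        rcases le_or_gt i j with hij | hji
        · rw [hC i j hij, mul_zero]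
        · rw [mem_Bn.mp hA i j hji, toZMod2_zero, zero_mul]
    rw [sum_congr rfl fun A hA => by rw [pairing_eq_zero A hA, AddChar.map_zero_eq_one],
      sum_const, nsmul_one]
  · push Not at hC
    obtain ⟨i₀, j₀, hij, hC⟩ := hC
    have hC_one : C i₀ j₀ = 1 := by revert hC; generalize C i₀ j₀ = c; decide +revert
    have flip_mem : ∀ A ∈ Bn n, A + single i₀ j₀ 1 ∈ Bn n := fun A hA =>
      mem_Bn.mpr fun i j hji => by
        have not_single : ¬(i₀ = i ∧ j₀ = j) := by rintro ⟨rfl, rfl⟩; exact hji.not_ge hij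
        rw [Matrix.add_apply, mem_Bn.mp hA i j hji, single_apply, if_neg not_single, add_zero]
    refine sum_involution (fun A _ => A + single i₀ j₀ 1) (fun A _ => ?_) (fun A _ _ => ?_)
      flip_mem (fun A _ => ?_)
    · rw [pairing_add_single_left, hC_one, signChar_add_one, add_neg_cancel]
    · intro h
      have h_entry := congrFun (congrFun h i₀) j₀
      rw [Matrix.add_apply, single_apply_same] at h_entry
      revert h_entry
      generalize A i₀ j₀ = a
      decide +revert
    · rw [add_assoc, ← single_add, show (1 + 1 : Fin 2) = 0 from rfl, single_zero, add_zero]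

end Ensemble

section State

variable {n : ℕ} (A : Matrix (Fin n) (Fin n) (Fin 2))

lemma natCast_quadB (x : Bits n) :
    ((quadB A x : ℕ) : ZMod 2) = pairing A (vecMulVec (toZMod2 ∘ x) (toZMod2 ∘ x)) := by
  simp only [quadB, pairing, Nat.cast_sum, Nat.cast_mul, vecMulVec_apply, Function.comp,
    toZMod2, mul_assoc]

lemma star_phiReq (x : Bits n) : starRingEnd ℂ (phiReq A x) = phiReq A x := by
  simp [phiReq, Complex.conj_ofReal]

lemma phiReq_mul_phiReq (x y : Bits n) :
    phiReq A x * phiReq A y = (-1) ^ (quadB A x + quadB A y) / 2 ^ n := by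
  rw [phiReq, phiReq, div_mul_div_comm, ← pow_add, ← Complex.ofReal_mul,
    Real.mul_self_sqrt (by positivity)]
  push_cast
  rfl

lemma kron2_outer_phiReq_apply (x y w s : Bits n) :
    kron2 (outer (phiReq A)) (x, y) (w, s) = ((4 : ℂ) ^ n)⁻¹ * signChar
      (pairing A (quadCoeffs (toZMod2 ∘ x) (toZMod2 ∘ y) (toZMod2 ∘ w) (toZMod2 ∘ s))) := by
  simp only [kron2, outer, of_apply, star_phiReq]
  rw [phiReq_mul_phiReq, phiReq_mul_phiReq, div_mul_div_comm, ← pow_add,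
    neg_one_pow_eq_signChar, quadCoeffs, pairing_add_right, pairing_add_right, pairing_add_right]
  push_cast [natCast_quadB]
  rw [← mul_pow, inv_mul_eq_div]
  congr 2
  · ring
  · norm_num

end State

theorem respovm_second_moment (n : ℕ) :
    (((Bn n).card : ℂ))⁻¹ • ∑ A ∈ Bn n, kron2 (outer (phiReq A)) =
      ((4 : ℂ) ^ n)⁻¹ •
        ((1 : Matrix (Bits n × Bits n) (Bits n × Bits n) ℂ)
          + (∑ x : Bits n, ∑ y : Bits n, Matrix.single (x, y) (y, x) (1 : ℂ))
          + (∑ x : Bits n, ∑ y : Bits n, Matrix.single (x, x) (y, y) (1 : ℂ))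
          - (2 : ℂ) • ∑ x : Bits n, Matrix.single (x, x) (x, x) (1 : ℂ)) := by
  ext ⟨x, y⟩ ⟨w, s⟩
  rw [Matrix.smul_apply, Matrix.smul_apply, secondMoment_rhs_apply, Matrix.sum_apply]
  simp only [kron2_outer_phiReq_apply, ← mul_sum, sum_Bn_signChar_pairing,
    quadCoeffs_upper_eq_zero_iff, (toZMod2_injective.comp_left (α := Fin n)).pairsUp_iff]
  split_ifs
  · rw [smul_eq_mul, smul_eq_mul, mul_one, mul_left_comm, inv_mul_cancel₀ card_Bn_ne_zero,
      mul_one]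
  · simp
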